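/- arXiv:2410.01389 — 4 statements merged into one kernel-verified Lean document; each statement's English description precedes it below -/
import Mathlib

section
/- Choi's theorem: for finite-dimensional Hilbert spaces H and K, the map sending a linear map Φ : B(H) → B(K) to its Choi matrix C_Φ = ∑_{i,j} Φ(E_{ij}) ⊗ E_{ij} ∈ B(K) ⊗ B(H) (where E_{ij} are matrix units of B(H)) is a linear bijection under which Φ is completely positive if and only if C_Φ is positive semidefinite. -/
noncomputable section

open Matrix Kronecker ComplexOrder

/-- The `n`-fold amplification `id_{M_n} ⊗ Φ` of a map between matrix algebras. -/
def matAmp {α β : Type*} [Fintype α] [Fintype β] (n : ℕ)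
    (Φ : Matrix α α ℂ → Matrix β β ℂ)
    (M : Matrix (Fin n × α) (Fin n × α) ℂ) : Matrix (Fin n × β) (Fin n × β) ℂ :=
  fun p q => Φ (fun i j => M (p.1, i) (q.1, j)) p.2 q.2

/-- A map between matrix algebras is completely positive if all its amplifications
preserve positive semidefiniteness. -/
def IsCPMap {α β : Type*} [Fintype α] [Fintype β]
    (Φ : Matrix α α ℂ → Matrix β β ℂ) : Prop :=
  ∀ (n : ℕ) (M : Matrix (Fin n × α) (Fin n × α) ℂ),
    M.PosSemidef → (matAmp n Φ M).PosSemidef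

/-- Partial trace over the first tensor factor. -/
def ptrFst {α β : Type*} [Fintype α] (M : Matrix (α × β) (α × β) ℂ) : Matrix β β ℂ :=
  fun i j => ∑ a, M (a, i) (a, j)

/-- The Choi matrix `∑_{i,j} Φ(E_{ij}) ⊗ E_{ij}` of a map between matrix algebras. -/
def choiFun {a b : ℕ} (Φ : Matrix (Fin a) (Fin a) ℂ → Matrix (Fin b) (Fin b) ℂ) :
    Matrix (Fin b × Fin a) (Fin b × Fin a) ℂ :=
  fun p q => Φ (Matrix.single p.2 q.2 1) p.1 q.1

lemma sum3_rot {α β γ M : Type*} [Fintype α] [Fintype β] [Fintype γ]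
    [AddCommMonoid M] (f : α → β → γ → M) :
    ∑ a, ∑ b, ∑ c, f a b c = ∑ c, ∑ a, ∑ b, f a b c :=
  calc ∑ a, ∑ b, ∑ c, f a b c = ∑ a, ∑ c, ∑ b, f a b c :=
        Finset.sum_congr rfl fun _ _ => Finset.sum_comm
    _ = ∑ c, ∑ a, ∑ b, f a b c := Finset.sum_comm

lemma sum4_swap {α β γ δ M : Type*} [Fintype α] [Fintype β] [Fintype γ] [Fintype δ]
    [AddCommMonoid M] (f : α → β → γ → δ → M) :
    ∑ a, ∑ b, ∑ c, ∑ d, f a b c d = ∑ c, ∑ d, ∑ a, ∑ b, f a b c d :=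
  calc ∑ a, ∑ b, ∑ c, ∑ d, f a b c d = ∑ c, ∑ a, ∑ b, ∑ d, f a b c d :=
        sum3_rot _
    _ = ∑ c, ∑ d, ∑ a, ∑ b, f a b c d :=
        Finset.sum_congr rfl fun _ _ => sum3_rot _

lemma apply_eq_choi {h k : ℕ} (Φ : Matrix (Fin h) (Fin h) ℂ →ₗ[ℂ] Matrix (Fin k) (Fin k) ℂ)
    (X : Matrix (Fin h) (Fin h) ℂ) (a b : Fin k) :
    Φ X a b = ∑ i, ∑ j, X i j * choiFun Φ (a, i) (b, j) := by
  conv_lhs => rw [Matrix.matrix_eq_sum_single X]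
  simp only [map_sum, Matrix.sum_apply]
  refine Finset.sum_congr rfl fun i _ => Finset.sum_congr rfl fun j _ => ?_
  have hs : Matrix.single i j (X i j) = X i j • Matrix.single i j 1 := by
    rw [Matrix.smul_single, smul_eq_mul, mul_one]
  rw [hs, LinearMap.map_smul]
  simp [choiFun]

open scoped MatrixOrder in
lemma psd_exists {n : Type*} [Fintype n] [DecidableEq n] {M : Matrix n n ℂ}
    (hM : M.PosSemidef) : ∃ B : Matrix n n ℂ, M = Bᴴ * B := by
  obtain ⟨X, hX, -, hXM⟩ := CFC.exists_sqrt_of_isSelfAdjoint_of_quasispectrumRestricts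
    hM.isHermitian (QuasispectrumRestricts.nnreal_of_nonneg hM.nonneg)
  exact ⟨X, by rw [← Matrix.star_eq_conjTranspose, hX.star_eq, hXM]⟩

/-- Choi's theorem: `Φ ↦ C_Φ` is a linear bijection between linear maps
`B(H) → B(K)` and `B(K) ⊗ B(H)`, under which complete positivity of `Φ`
corresponds to positive semidefiniteness of `C_Φ`. -/
theorem choi_theorem (h k : ℕ) :
    (∃ L : (Matrix (Fin h) (Fin h) ℂ →ₗ[ℂ] Matrix (Fin k) (Fin k) ℂ) ≃ₗ[ℂ]
        Matrix (Fin k × Fin h) (Fin k × Fin h) ℂ,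
      ∀ Φ : Matrix (Fin h) (Fin h) ℂ →ₗ[ℂ] Matrix (Fin k) (Fin k) ℂ, L Φ = choiFun Φ) ∧
    ∀ Φ : Matrix (Fin h) (Fin h) ℂ →ₗ[ℂ] Matrix (Fin k) (Fin k) ℂ,
      IsCPMap Φ ↔ (choiFun Φ).PosSemidef := by
  constructor
  · -- linear equivalence
    classical
    let F : (Matrix (Fin h) (Fin h) ℂ →ₗ[ℂ] Matrix (Fin k) (Fin k) ℂ) →ₗ[ℂ]
        Matrix (Fin k × Fin h) (Fin k × Fin h) ℂ :=
      { toFun := fun Φ => choiFun Φ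
        map_add' := fun Φ Ψ => by ext p q; simp [choiFun]
        map_smul' := fun c Φ => by ext p q; simp [choiFun] }
    let G : Matrix (Fin k × Fin h) (Fin k × Fin h) ℂ →ₗ[ℂ]
        (Matrix (Fin h) (Fin h) ℂ →ₗ[ℂ] Matrix (Fin k) (Fin k) ℂ) :=
      { toFun := fun C =>
          { toFun := fun X => fun a b => ∑ i, ∑ j, X i j * C (a, i) (b, j)
            map_add' := fun X Y => by
              ext a b
              simp [add_mul, Finset.sum_add_distrib]
              rfl
            map_smul' := fun c X => by
              ext a b
              simp [Finset.mul_sum, mul_assoc]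
              change _ = c * (∑ i, ∑ j, X i j * C (a, i) (b, j))
              simp [Finset.mul_sum] }
        map_add' := fun C D => by
          ext X a b
          simp [mul_add, Finset.sum_add_distrib]
          rfl
        map_smul' := fun c C => by
          ext X a b
          simp [Finset.mul_sum, mul_comm, mul_assoc, mul_left_comm]
          change (∑ x, ∑ x_1, c * (X x x_1 * C (a, x) (b, x_1))) =
            c * ∑ i, ∑ j, X i j * C (a, i) (b, j)
          simp [Finset.mul_sum] }
    refine ⟨LinearEquiv.ofLinear F G ?_ ?_, fun Φ => rfl⟩
    · apply LinearMap.ext; intro C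
      ext ⟨a, i⟩ ⟨b, j⟩
      show choiFun (G C) (a, i) (b, j) = C (a, i) (b, j)
      simp only [choiFun, G, LinearMap.coe_mk, AddHom.coe_mk]
      simp [Matrix.single, ite_and]
      change (∑ i', ∑ j', (Matrix.of fun r s => if i = r then if j = s then (1:ℂ) else 0 else 0) i' j'
        * C (a, i') (b, j')) = C (a, i) (b, j)
      simp
    · apply LinearMap.ext; intro Φ
      ext X a b
      show (∑ i, ∑ j, X i j * choiFun Φ (a, i) (b, j)) = Φ X a b
      exact (apply_eq_choi Φ X a b).symm
  · intro Φ
    constructor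
    · -- CP → PSD
      intro hCP
      let B0 : Matrix (Fin 1) (Fin h × Fin h) ℂ := Matrix.of fun _ p => if p.1 = p.2 then 1 else 0
      have hΩ : (B0ᴴ * B0).PosSemidef := Matrix.posSemidef_conjTranspose_mul_self B0
      have key := (hCP h (B0ᴴ * B0) hΩ).submatrix (fun p : Fin k × Fin h => (p.2, p.1))
      convert key using 1
      ext ⟨a, i⟩ ⟨b, j⟩
      show choiFun Φ (a, i) (b, j) = matAmp h Φ (B0ᴴ * B0) (i, a) (j, b)
      have hE : (fun (r s : Fin h) => (B0ᴴ * B0) (i, r) (j, s)) = Matrix.single i j (1 : ℂ) := by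
        ext r s
        rw [Matrix.mul_apply]
        simp [B0, Matrix.mul_apply, Matrix.conjTranspose_apply, Matrix.single, ite_and,
          eq_comm]
        split <;> split <;> simp_all
      show Φ (Matrix.single i j 1) a b = Φ (fun (r s : Fin h) => (B0ᴴ * B0) (i, r) (j, s)) a b
      rw [hE]
    · -- PSD → CP
      intro hC n M hM
      obtain ⟨B, hB⟩ := psd_exists hC
      obtain ⟨A, hA⟩ := psd_exists hM
      let D : Matrix ((Fin k × Fin h) × (Fin n × Fin h)) (Fin n × Fin k) ℂ :=
        Matrix.of fun mt sb => ∑ j, A mt.2 (sb.1, j) * B mt.1 (sb.2, j)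
      have hD : matAmp n Φ M = Dᴴ * D := by
        ext ⟨r, a⟩ ⟨s, b⟩
        show Φ (fun i j => M (r, i) (s, j)) a b = _
        refine (apply_eq_choi Φ _ a b).trans ?_
        have hMent : ∀ i j, M (r, i) (s, j) = ∑ t, (starRingEnd ℂ) (A t (r, i)) * A t (s, j) := by
          intro i j
          rw [hA]
          simp [Matrix.mul_apply, Matrix.conjTranspose_apply, RCLike.star_def]
        have hCent : ∀ (a' : Fin k) (i : Fin h) (b' : Fin k) (j : Fin h),
            choiFun Φ (a', i) (b', j) =
            ∑ m, (starRingEnd ℂ) (B m (a', i)) * B m (b', j) := by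
          intro a' i b' j
          rw [hB]
          simp [Matrix.mul_apply, Matrix.conjTranspose_apply, RCLike.star_def]
        simp only [hMent, hCent, Matrix.mul_apply, Matrix.conjTranspose_apply, D, Matrix.of_apply,
          RCLike.star_def, map_sum, _root_.map_mul, Finset.sum_mul_sum]
        conv_rhs => rw [Fintype.sum_prod_type]
        rw [sum4_swap]
        conv_lhs => rw [Finset.sum_comm]
        refine Finset.sum_congr rfl fun m _ => Finset.sum_congr rfl fun t _ =>
          Finset.sum_congr rfl fun i _ => Finset.sum_congr rfl fun j _ => ?_
        ring
      rw [hD]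
      exact Matrix.posSemidef_conjTranspose_mul_self D
end
end

section
/- Stinespring dilation (finite-dimensional case): every completely positive map Φ : B(H) → B(K) between matrix algebras over finite-dimensional Hilbert spaces admits a finite-dimensional Hilbert space E and a linear map V : K → H ⊗ E such that Φ(x) = V† (x ⊗ 1_E) V for all x ∈ B(H); moreover Φ is unital if and only if V can be chosen to be an isometry. -/
noncomputable section

open Matrix Kronecker ComplexOrder

theorem choi_posSemidef {h k : ℕ}
    (Φ : Matrix (Fin h) (Fin h) ℂ →ₗ[ℂ] Matrix (Fin k) (Fin k) ℂ)
    (hΦ : IsCPMap Φ) : (choiFun Φ).PosSemidef := by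
  classical
  set A : Matrix (Fin 1) (Fin h × Fin h) ℂ :=
    fun _ p => if p.1 = p.2 then 1 else 0 with hA
  have hAmp := hΦ h (Aᴴ * A) (Matrix.posSemidef_conjTranspose_mul_self A)
  have heq : choiFun Φ =
      (matAmp h Φ (Aᴴ * A)).submatrix (Equiv.prodComm (Fin k) (Fin h))
        (Equiv.prodComm (Fin k) (Fin h)) := by
    funext p q
    show Φ (Matrix.single p.2 q.2 1) p.1 q.1
      = Φ (fun p' q' => (Aᴴ * A) (p.2, p') (q.2, q')) p.1 q.1
    have harg : (Matrix.single p.2 q.2 (1:ℂ))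
        = fun p' q' => (Aᴴ * A) (p.2, p') (q.2, q') := by
      funext p' q'
      rw [Matrix.mul_apply, Fin.sum_univ_one, Matrix.conjTranspose_apply]
      simp only [Matrix.mul_apply, Matrix.conjTranspose_apply, hA, Fin.sum_univ_one]
      by_cases h1 : p.2 = p' <;> by_cases h2 : q.2 = q' <;>
        simp [Matrix.single, h1, h2]
    rw [harg]
  rw [heq]
  exact hAmp.submatrix _

theorem stinespring_key (h k : ℕ)
    (Φ : Matrix (Fin h) (Fin h) ℂ →ₗ[ℂ] Matrix (Fin k) (Fin k) ℂ)
    (hΦ : IsCPMap Φ) :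
    ∃ V : Matrix (Fin h × Fin (k * h)) (Fin k) ℂ,
      ∀ x : Matrix (Fin h) (Fin h) ℂ,
        Φ x = Vᴴ * ((x ⊗ₖ (1 : Matrix (Fin (k * h)) (Fin (k * h)) ℂ)) * V) := by
  classical
  obtain ⟨B, hB⟩ : ∃ B : Matrix (Fin k × Fin h) (Fin k × Fin h) ℂ, choiFun Φ = Bᴴ * B := by
    open scoped MatrixOrder in
    obtain ⟨B, hB⟩ := CStarAlgebra.nonneg_iff_eq_star_mul_self.mp (choi_posSemidef Φ hΦ).nonneg
    exact ⟨B, hB⟩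
  refine ⟨Matrix.of fun pm j => B (finProdFinEquiv.symm pm.2) (j, pm.1), fun x => ?_⟩
  funext i j
  have hL : Φ x i j = ∑ p, ∑ q, x p q * choiFun Φ (i, p) (j, q) := by
    conv_lhs => rw [Matrix.matrix_eq_sum_single x]
    rw [map_sum, Matrix.sum_apply]
    refine Finset.sum_congr rfl fun p _ => ?_
    rw [map_sum, Matrix.sum_apply]
    refine Finset.sum_congr rfl fun q _ => ?_
    rw [show Matrix.single p q (x p q) = x p q • Matrix.single p q (1:ℂ) by
      rw [Matrix.smul_single, smul_eq_mul, mul_one], _root_.map_smul]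
    simp [choiFun, smul_eq_mul]
  rw [hL]
  simp only [hB, Matrix.mul_apply, Matrix.of_apply, Matrix.conjTranspose_apply, Fintype.sum_prod_type,
    Matrix.kroneckerMap_apply, Matrix.one_apply, mul_ite, ite_mul, mul_one, mul_zero,
    zero_mul, one_mul, Finset.sum_ite_eq, Finset.sum_ite_eq', Finset.mem_univ, if_true]
  -- LHS: ∑ p ∑ q, x p q * ∑ w1 ∑ w2, star (B (w1,w2) (i,p)) * B (w1,w2) (j,q)
  -- RHS: ∑ p ∑ m, star (B (e.symm m) (i,p)) * ∑ q, x p q * B (e.symm m) (j,q)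
  refine Finset.sum_congr rfl fun p _ => ?_
  rw [Equiv.sum_comp finProdFinEquiv.symm
    (fun w : Fin k × Fin h => star (B w (i, p)) * ∑ q, x p q * B w (j, q))]
  simp only [Finset.mul_sum, Fintype.sum_prod_type]
  conv_lhs => rw [Finset.sum_comm]
  refine Finset.sum_congr rfl fun w1 _ => ?_
  conv_lhs => rw [Finset.sum_comm]
  refine Finset.sum_congr rfl fun w2 _ => Finset.sum_congr rfl fun q _ => by ring

/-- Stinespring dilation (finite-dimensional case): every completely positive map
`Φ : B(H) → B(K)` admits an environment `E` and `V : K → H ⊗ E` with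
`Φ(x) = V† (x ⊗ 1_E) V`; moreover `Φ` is unital iff `V` can be chosen to be an isometry. -/
theorem stinespring_dilation (h k : ℕ)
    (Φ : Matrix (Fin h) (Fin h) ℂ →ₗ[ℂ] Matrix (Fin k) (Fin k) ℂ)
    (hΦ : IsCPMap Φ) :
    (∃ (e : ℕ) (V : Matrix (Fin h × Fin e) (Fin k) ℂ),
      ∀ x : Matrix (Fin h) (Fin h) ℂ,
        Φ x = Vᴴ * ((x ⊗ₖ (1 : Matrix (Fin e) (Fin e) ℂ)) * V)) ∧
    ((Φ 1 = 1) ↔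
      ∃ (e : ℕ) (V : Matrix (Fin h × Fin e) (Fin k) ℂ),
        Vᴴ * V = 1 ∧
        ∀ x : Matrix (Fin h) (Fin h) ℂ,
          Φ x = Vᴴ * ((x ⊗ₖ (1 : Matrix (Fin e) (Fin e) ℂ)) * V)) := by
  obtain ⟨V, hV⟩ := stinespring_key h k Φ hΦ
  refine ⟨⟨k * h, V, hV⟩, ?_, ?_⟩
  · intro h1
    refine ⟨k * h, V, ?_, hV⟩
    have := hV 1
    rwa [Matrix.one_kronecker_one, Matrix.one_mul, h1, eq_comm] at this
  · rintro ⟨e, V', hVV, hV'⟩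
    rw [hV' 1, Matrix.one_kronecker_one, Matrix.one_mul, hVV]
end
end

section
/- Lemma 1 (identification of trace-dual of the TP cone): Let A = B(K) ⊗ B(H) for finite-dimensional Hilbert spaces K, H, and let C ∈ A satisfy Tr(C·F) = 1 for every positive semidefinite F ∈ A with Tr_K(F) = 1_H. Then C = 1_K ⊗ ρ for some ρ ∈ B(H) with Tr(ρ) = 1; moreover if C is positive semidefinite then so is ρ. -/
noncomputable section

open Matrix Kronecker ComplexOrder

open Finset in
lemma one_add_real_smul_posSemidef {n : Type*} [Fintype n] [DecidableEq n]
    (G : Matrix n n ℂ) (hG : G.IsHermitian) :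
    ∃ δ : ℝ, 0 < δ ∧ ((1 : Matrix n n ℂ) + (δ : ℂ) • G).PosSemidef := by
  classical
  set B : ℝ := ∑ i, ∑ j, ‖G i j‖ with hBdef
  have hB0 : 0 ≤ B := Finset.sum_nonneg fun i _ => Finset.sum_nonneg fun j _ => (norm_nonneg _)
  refine ⟨(B + 1)⁻¹, by positivity, Matrix.PosSemidef.of_dotProduct_mulVec_nonneg ?_ ?_⟩
  · show (_ : Matrix n n ℂ)ᴴ = _
    rw [conjTranspose_add, conjTranspose_smul, conjTranspose_one, hG.eq]
    congr 1
    simp [Complex.star_def, Complex.conj_ofReal]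
  · intro x
    set δ : ℝ := (B + 1)⁻¹ with hδdef
    have hδpos : 0 < δ := by positivity
    set sre : ℝ := ∑ i, ‖x i‖ ^ 2 with hsre
    have hsre0 : 0 ≤ sre := Finset.sum_nonneg fun i _ => sq_nonneg _
    have hxi : ∀ i, ‖x i‖ ^ 2 ≤ sre := by
      intro i
      rw [hsre]
      exact Finset.single_le_sum (f := fun j => ‖x j‖ ^ 2)
        (fun j _ => sq_nonneg _) (mem_univ i)
    have hxij : ∀ i j, ‖x i‖ * ‖x j‖ ≤ sre := by
      intro i j
      nlinarith [hxi i, hxi j, sq_nonneg (‖x i‖ - ‖x j‖)]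
    set t : ℂ := star x ⬝ᵥ G *ᵥ x with ht
    have htstar : star t = t := by
      calc star t = star (star (star (G *ᵥ x) ⬝ᵥ x)) := by rw [ht, Matrix.star_dotProduct]
        _ = star (G *ᵥ x) ⬝ᵥ x := star_star _
        _ = (star x ᵥ* Gᴴ) ⬝ᵥ x := by rw [Matrix.star_mulVec]
        _ = star x ⬝ᵥ (Gᴴ *ᵥ x) := (Matrix.dotProduct_mulVec _ _ _).symm
        _ = t := by rw [hG.eq, ht]
    have htim : t.im = 0 := by
      have h1 : (starRingEnd ℂ t).im = t.im := congrArg Complex.im htstar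
      simp only [Complex.conj_im] at h1
      linarith
    have habs : ‖t‖ ≤ B * sre := by
      have h1 : t = ∑ i, (star x) i * (G *ᵥ x) i := rfl
      calc ‖t‖ ≤ ∑ i, ‖(star x) i * (G *ᵥ x) i‖ := by
            rw [h1]; exact norm_sum_le _ _
        _ ≤ ∑ i, ∑ j, ‖G i j‖ * sre := by
            apply Finset.sum_le_sum; intro i _
            rw [norm_mul]
            have h2 : ‖(G *ᵥ x) i‖ ≤ ∑ j, ‖G i j‖ * ‖x j‖ := by
              rw [show (G *ᵥ x) i = ∑ j, G i j * x j from rfl]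
              refine (norm_sum_le _ _).trans (le_of_eq ?_)
              simp [norm_mul]
            have h3 : ‖(star x) i‖ = ‖x i‖ := by
              simp [Pi.star_apply, Complex.star_def]
            calc ‖(star x) i‖ * ‖(G *ᵥ x) i‖
                ≤ ‖x i‖ * ∑ j, ‖G i j‖ * ‖x j‖ := by
                  rw [h3]; exact mul_le_mul_of_nonneg_left h2 (norm_nonneg _)
              _ = ∑ j, ‖x i‖ * (‖G i j‖ * ‖x j‖) := by
                  rw [Finset.mul_sum]
              _ ≤ ∑ j, ‖G i j‖ * sre := by
                  apply Finset.sum_le_sum; intro j _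
                  have := hxij i j
                  have hg := norm_nonneg (G i j)
                  nlinarith
        _ = B * sre := by rw [hBdef, Finset.sum_mul]; simp [Finset.sum_mul]
    have hq : star x ⬝ᵥ (((1 : Matrix n n ℂ) + (δ : ℂ) • G) *ᵥ x) = (sre : ℂ) + (δ : ℂ) * t := by
      rw [Matrix.add_mulVec, Matrix.one_mulVec, dotProduct_add, Matrix.smul_mulVec,
        dotProduct_smul, smul_eq_mul]
      congr 1
      rw [show star x ⬝ᵥ x = ∑ i, (star x) i * x i from rfl]
      rw [hsre]
      push_cast
      apply Finset.sum_congr rfl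
      intro i _
      rw [Pi.star_apply, Complex.star_def, ← Complex.normSq_eq_conj_mul_self,
        Complex.normSq_eq_norm_sq]
      push_cast
      ring
    rw [hq, Complex.nonneg_iff]
    refine ⟨?_, ?_⟩
    · simp only [Complex.add_re, Complex.ofReal_re, Complex.mul_re, Complex.ofReal_im, htim,
        mul_zero, zero_mul, sub_zero]
      have h1 : |t.re| ≤ B * sre := (Complex.abs_re_le_norm t).trans habs
      rw [abs_le] at h1
      have h3 : ((B + 1) * δ) * sre = sre := by rw [hδdef, mul_inv_cancel₀ (by positivity), one_mul]
      nlinarith [mul_le_mul_of_nonneg_left h1.1 hδpos.le, mul_nonneg hδpos.le hsre0]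
    · simp [Complex.add_im, Complex.mul_im, htim]

lemma ptrFst_add {α β : Type*} [Fintype α] [Fintype β] (M N : Matrix (α × β) (α × β) ℂ) :
    ptrFst (M + N) = ptrFst M + ptrFst N := by
  funext i j
  simp [ptrFst, Finset.sum_add_distrib]

lemma ptrFst_sub {α β : Type*} [Fintype α] [Fintype β] (M N : Matrix (α × β) (α × β) ℂ) :
    ptrFst (M - N) = ptrFst M - ptrFst N := by
  funext i j
  simp [ptrFst, Finset.sum_sub_distrib]

lemma ptrFst_smul {α β : Type*} [Fintype α] [Fintype β] (c : ℂ) (M : Matrix (α × β) (α × β) ℂ) :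
    ptrFst (c • M) = c • ptrFst M := by
  funext i j
  simp [ptrFst, Finset.mul_sum]

lemma ptrFst_conjTranspose {α β : Type*} [Fintype α] [Fintype β] (M : Matrix (α × β) (α × β) ℂ) :
    ptrFst Mᴴ = (ptrFst M)ᴴ := by
  funext i j
  simp [ptrFst, conjTranspose_apply, map_sum]

lemma ptrFst_one {k h : ℕ} :
    ptrFst (1 : Matrix (Fin k × Fin h) (Fin k × Fin h) ℂ) = (k : ℂ) • 1 := by
  funext i j
  simp only [ptrFst, Matrix.one_apply, Prod.mk.injEq, Matrix.smul_apply, smul_eq_mul]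
  by_cases hij : i = j <;> simp [hij, Finset.sum_const, nsmul_eq_mul]

lemma posSemidef_real_smul {n : Type*} [Fintype n] {M : Matrix n n ℂ}
    (hM : M.PosSemidef) {r : ℝ} (hr : 0 ≤ r) : ((r : ℂ) • M).PosSemidef := by
  refine Matrix.PosSemidef.of_dotProduct_mulVec_nonneg ?_ ?_
  · show (_ : Matrix n n ℂ)ᴴ = _
    rw [conjTranspose_smul, hM.1.eq]
    congr 1
    simp [Complex.star_def, Complex.conj_ofReal]
  · intro x
    rw [Matrix.smul_mulVec, dotProduct_smul, smul_eq_mul]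
    exact mul_nonneg (by exact_mod_cast Complex.zero_le_real.mpr hr) (hM.dotProduct_mulVec_nonneg x)

lemma trace_mul_single {n : Type*} [Fintype n] [DecidableEq n] (C : Matrix n n ℂ) (p q : n) :
    (C * (Matrix.of fun r s => if r = q ∧ s = p then (1:ℂ) else 0)).trace = C p q := by
  simp [Matrix.trace, Matrix.diag, Matrix.mul_apply, ite_and, mul_ite, mul_one, mul_zero,
    Finset.sum_ite_eq, Finset.sum_ite_eq']

lemma trace_mul_blockdiag {k h : ℕ} (C : Matrix (Fin k × Fin h) (Fin k × Fin h) ℂ) (i j : Fin h) :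
    (C * (Matrix.of fun r s : Fin k × Fin h =>
      if r.1 = s.1 ∧ r.2 = j ∧ s.2 = i then (1:ℂ) else 0)).trace = ∑ c, C (c, i) (c, j) := by
  simp [Matrix.trace, Matrix.diag, Matrix.mul_apply, Fintype.sum_prod_type, ite_and, mul_ite,
    mul_one, mul_zero, Finset.sum_ite_eq, Finset.sum_ite_eq']

lemma ptrFst_single {k h : ℕ} (a b : Fin k) (i j : Fin h) :
    ptrFst (Matrix.of fun r s : Fin k × Fin h => if r = (b, j) ∧ s = (a, i) then (1:ℂ) else 0)
      = Matrix.of fun i' j' => if a = b ∧ i' = j ∧ j' = i then (1:ℂ) else 0 := by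
  funext i' j'
  simp only [ptrFst, Matrix.of_apply, Prod.mk.injEq]
  by_cases hab : a = b
  · subst hab
    by_cases h1 : i' = j <;> by_cases h2 : j' = i <;>
      simp [h1, h2, ite_and, Finset.sum_ite_eq, Finset.sum_ite_eq']
  · simp only [hab, false_and, if_false]
    apply Finset.sum_eq_zero
    intro c _
    by_cases h1 : c = b <;> by_cases h2 : c = a <;> simp_all

lemma ptrFst_blockdiag {k h : ℕ} (i j : Fin h) :
    ptrFst (Matrix.of fun r s : Fin k × Fin h =>
        if r.1 = s.1 ∧ r.2 = j ∧ s.2 = i then (1:ℂ) else 0)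
      = Matrix.of fun i' j' => if i' = j ∧ j' = i then (k : ℂ) else 0 := by
  funext i' j'
  simp only [ptrFst, Matrix.of_apply]
  by_cases h1 : i' = j <;> by_cases h2 : j' = i <;>
    simp [h1, h2, Finset.sum_const, nsmul_eq_mul]

open Finset in
/-- Lemma 1: if `Tr(C·F) = 1` for every positive semidefinite `F` with `Tr_K(F) = 1_H`,
then `C = 1_K ⊗ ρ` for some `ρ` of trace 1; moreover `ρ` is positive whenever `C` is. -/
theorem trace_dual_of_tp_cone (h k : ℕ)
    (C : Matrix (Fin k × Fin h) (Fin k × Fin h) ℂ)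
    (hC : ∀ F : Matrix (Fin k × Fin h) (Fin k × Fin h) ℂ,
      F.PosSemidef → ptrFst F = 1 → (C * F).trace = 1) :
    ∃ ρ : Matrix (Fin h) (Fin h) ℂ,
      ρ.trace = 1 ∧
      C = (1 : Matrix (Fin k) (Fin k) ℂ) ⊗ₖ ρ ∧
      (C.PosSemidef → ρ.PosSemidef) := by
  classical
  rcases Nat.eq_zero_or_pos h with hh | hh
  · exfalso
    have h0 := hC 0 Matrix.PosSemidef.zero (by
      subst hh
      funext i j
      exact i.elim0)
    simp at h0
  rcases Nat.eq_zero_or_pos k with hk | hk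
  · subst hk
    have hhne : (h : ℂ) ≠ 0 := Nat.cast_ne_zero.mpr hh.ne'
    refine ⟨(((h : ℝ)⁻¹ : ℝ) : ℂ) • (1 : Matrix (Fin h) (Fin h) ℂ), ?_, ?_, ?_⟩
    · rw [Matrix.trace_smul, Matrix.trace_one, Fintype.card_fin, smul_eq_mul]
      push_cast
      field_simp
    · funext p q
      exact p.1.elim0
    · intro _
      exact posSemidef_real_smul Matrix.PosSemidef.one (by positivity)
  -- main case
  have hkR : (0:ℝ) ≤ (k : ℝ)⁻¹ := by positivity
  have hkC : (k : ℂ) ≠ 0 := Nat.cast_ne_zero.mpr hk.ne'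
  have hkCinv : (((k : ℝ)⁻¹ : ℝ) : ℂ) = (k : ℂ)⁻¹ := by push_cast; ring
  have hF0psd : ((((k : ℝ)⁻¹ : ℝ) : ℂ) •
      (1 : Matrix (Fin k × Fin h) (Fin k × Fin h) ℂ)).PosSemidef :=
    posSemidef_real_smul Matrix.PosSemidef.one hkR
  have hF0ptr : ptrFst ((((k : ℝ)⁻¹ : ℝ) : ℂ) •
      (1 : Matrix (Fin k × Fin h) (Fin k × Fin h) ℂ)) = 1 := by
    rw [ptrFst_smul, ptrFst_one, smul_smul, hkCinv, inv_mul_cancel₀ hkC, one_smul]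
  have hTrC : (k : ℂ)⁻¹ * C.trace = 1 := by
    have := hC _ hF0psd hF0ptr
    rwa [Matrix.mul_smul, Matrix.mul_one, Matrix.trace_smul, smul_eq_mul, hkCinv] at this
  -- Step B: Hermitian matrices with vanishing partial trace pair to zero with C
  have keyH : ∀ G : Matrix (Fin k × Fin h) (Fin k × Fin h) ℂ,
      G.IsHermitian → ptrFst G = 0 → (C * G).trace = 0 := by
    intro G hG hptr
    obtain ⟨δ, hδ, hpsd⟩ := one_add_real_smul_posSemidef G hG
    have hδC : (δ : ℂ) ≠ 0 := Complex.ofReal_ne_zero.mpr hδ.ne'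
    set F := (((k : ℝ)⁻¹ : ℝ) : ℂ) •
      ((1 : Matrix (Fin k × Fin h) (Fin k × Fin h) ℂ) + (δ : ℂ) • G) with hF
    have hFpsd : F.PosSemidef := posSemidef_real_smul hpsd hkR
    have hFptr : ptrFst F = 1 := by
      rw [hF, ptrFst_smul, ptrFst_add, ptrFst_one, ptrFst_smul, hptr, smul_zero, add_zero,
        smul_smul, hkCinv, inv_mul_cancel₀ hkC, one_smul]
    have hCF := hC F hFpsd hFptr
    rw [hF, Matrix.mul_smul, Matrix.trace_smul, Matrix.mul_add, Matrix.mul_one,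
      Matrix.trace_add, Matrix.mul_smul, Matrix.trace_smul, smul_eq_mul, smul_eq_mul,
      hkCinv] at hCF
    have h5 : (k : ℂ)⁻¹ * ((δ : ℂ) * (C * G).trace) = 0 := by
      linear_combination hCF - hTrC
    rcases mul_eq_zero.mp h5 with h6 | h6
    · exact absurd h6 (inv_ne_zero hkC)
    rcases mul_eq_zero.mp h6 with h7 | h7
    · exact absurd h7 hδC
    · exact h7
  -- Step C: arbitrary matrices with vanishing partial trace
  have key : ∀ G : Matrix (Fin k × Fin h) (Fin k × Fin h) ℂ,
      ptrFst G = 0 → (C * G).trace = 0 := by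
    intro G hptr
    set H1 := (2 : ℂ)⁻¹ • (G + Gᴴ) with hH1
    set H2 := (Complex.I / 2) • (Gᴴ - G) with hH2
    have hptrH : ptrFst Gᴴ = 0 := by rw [ptrFst_conjTranspose, hptr]; simp
    have hH1herm : H1.IsHermitian := by
      show H1ᴴ = H1
      rw [hH1, conjTranspose_smul, conjTranspose_add, conjTranspose_conjTranspose,
        add_comm Gᴴ G]
      congr 1
      simp [Complex.star_def]
    have hH2herm : H2.IsHermitian := by
      show H2ᴴ = H2
      rw [hH2, conjTranspose_smul, conjTranspose_sub, conjTranspose_conjTranspose]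
      have hs : star (Complex.I / 2) = -(Complex.I / 2) := by
        simp [Complex.star_def, neg_div]
      rw [hs, neg_smul, ← smul_neg, neg_sub]
    have hH1ptr : ptrFst H1 = 0 := by
      rw [hH1, ptrFst_smul, ptrFst_add, hptr, hptrH]; simp
    have hH2ptr : ptrFst H2 = 0 := by
      rw [hH2, ptrFst_smul, ptrFst_sub, hptrH, hptr]; simp
    have hrec : G = H1 + Complex.I • H2 := by
      funext p q
      simp only [hH1, hH2, Matrix.add_apply, Matrix.smul_apply, Matrix.sub_apply,
        Matrix.conjTranspose_apply, smul_eq_mul]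
      linear_combination ((G p q - star (G q p)) / 2) * Complex.I_mul_I
    rw [hrec, Matrix.mul_add, Matrix.trace_add, keyH H1 hH1herm hH1ptr, Matrix.mul_smul,
      Matrix.trace_smul, keyH H2 hH2herm hH2ptr, smul_zero, add_zero]
  -- the reduced state
  set S : Matrix (Fin h) (Fin h) ℂ := Matrix.of fun i j => ∑ c, C (c, i) (c, j) with hS
  have entry : ∀ (a b : Fin k) (i j : Fin h),
      C (a, i) (b, j) = (if a = b then (k : ℂ)⁻¹ else 0) * S i j := by
    intro a b i j
    have hG := key
      ((Matrix.of fun r s : Fin k × Fin h => if r = (b, j) ∧ s = (a, i) then (1:ℂ) else 0)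
        - (if a = b then (k : ℂ)⁻¹ else 0) • (Matrix.of fun r s : Fin k × Fin h =>
            if r.1 = s.1 ∧ r.2 = j ∧ s.2 = i then (1:ℂ) else 0)) ?_
    · rw [Matrix.mul_sub, Matrix.trace_sub, _root_.trace_mul_single, Matrix.mul_smul,
        Matrix.trace_smul, trace_mul_blockdiag, smul_eq_mul, sub_eq_zero] at hG
      rw [hG, hS]
      rfl
    · rw [ptrFst_sub, ptrFst_smul, ptrFst_single, ptrFst_blockdiag]
      funext i' j'
      simp only [Matrix.sub_apply, Matrix.smul_apply, Matrix.of_apply, smul_eq_mul,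
        Matrix.zero_apply]
      by_cases hab : a = b <;> by_cases h1 : i' = j <;> by_cases h2 : j' = i <;>
        simp [hab, h1, h2, inv_mul_cancel₀ hkC]
  refine ⟨(k : ℂ)⁻¹ • S, ?_, ?_, ?_⟩
  · have hStr : S.trace = C.trace := by
      simp only [Matrix.trace, Matrix.diag, hS, Matrix.of_apply, Fintype.sum_prod_type]
      exact Finset.sum_comm
    rw [Matrix.trace_smul, smul_eq_mul, hStr]
    exact hTrC
  · funext p q
    obtain ⟨a, i⟩ := p
    obtain ⟨b, j⟩ := q
    rw [entry a b i j]
    simp only [kroneckerMap_apply, Matrix.one_apply, Matrix.smul_apply, smul_eq_mul]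
    by_cases hab : a = b <;> simp [hab]
  · intro hCpsd
    have hCh : ∀ p q, star (C q p) = C p q := by
      intro p q
      have := congrFun (congrFun hCpsd.1 p) q
      simpa [Matrix.conjTranspose_apply] using this
    have hkinvstar : star ((k : ℂ)⁻¹) = (k : ℂ)⁻¹ := by
      rw [← hkCinv]
      simp [Complex.star_def, Complex.conj_ofReal]
    refine Matrix.PosSemidef.of_dotProduct_mulVec_nonneg ?_ ?_
    · show (_ : Matrix (Fin h) (Fin h) ℂ)ᴴ = _
      funext i j
      simp only [Matrix.conjTranspose_apply, Matrix.smul_apply, smul_eq_mul, star_mul',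
        hkinvstar, hS, Matrix.of_apply, star_sum, hCh]
    · intro x
      set y : Fin k → (Fin k × Fin h → ℂ) := fun c p => if p.1 = c then x p.2 else 0 with hy
      have hyc : ∀ c, star (y c) ⬝ᵥ C *ᵥ (y c)
          = ∑ i, ∑ j, star (x i) * (C (c, i) (c, j) * x j) := by
        intro c
        rw [show star (y c) ⬝ᵥ C *ᵥ (y c) = ∑ p, star (y c p) * (C *ᵥ y c) p from rfl]
        rw [Fintype.sum_prod_type]
        rw [Finset.sum_comm]
        apply Finset.sum_congr rfl
        intro i _
        simp only [hy, Pi.star_apply, apply_ite, star_zero, ite_mul, zero_mul,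
          Finset.sum_ite_eq', Finset.mem_univ, if_true]
        rw [show (C *ᵥ fun p => if p.1 = c then x p.2 else 0) (c, i)
            = ∑ q, C (c, i) q * (if q.1 = c then x q.2 else 0) from rfl]
        rw [Fintype.sum_prod_type]
        rw [Finset.sum_comm]
        rw [Finset.mul_sum]
        apply Finset.sum_congr rfl
        intro j _
        simp [Finset.sum_ite_eq', mul_ite]
      have hsplit : star x ⬝ᵥ ((k : ℂ)⁻¹ • S) *ᵥ x
          = (k : ℂ)⁻¹ * ∑ c, star (y c) ⬝ᵥ C *ᵥ (y c) := by
        rw [Matrix.smul_mulVec, dotProduct_smul, smul_eq_mul]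
        congr 1
        rw [show star x ⬝ᵥ S *ᵥ x = ∑ i, star (x i) * ∑ j, S i j * x j from rfl]
        simp only [hyc]
        conv_rhs => rw [Finset.sum_comm]
        apply Finset.sum_congr rfl
        intro i _
        rw [Finset.mul_sum]
        conv_rhs => rw [Finset.sum_comm]
        apply Finset.sum_congr rfl
        intro j _
        rw [hS]
        simp only [Matrix.of_apply]
        rw [Finset.sum_mul, Finset.mul_sum]
      rw [hsplit]
      refine mul_nonneg ?_ (Finset.sum_nonneg fun c _ => hCpsd.dotProduct_mulVec_nonneg (y c))
      rw [← hkCinv]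
      exact Complex.zero_le_real.mpr hkR
end
end

section
/- Lemma 2 (supermaps act as identity-times-channel on dual side): Let S : B(H_out) ⊗ B(H_in) → B(K_out) ⊗ B(K_in) be a completely positive map which sends every positive operator F with Tr_{H_out}(F) = 1_{H_in} to a positive operator with Tr_{K_out}(S(F)) = 1_{K_in}. Then there exists a completely positive trace-preserving map N_* : B(K_in) → B(H_in) such that for every density matrix ρ ∈ B(K_in), the Hilbert–Schmidt adjoint S_* satisfies S_*(1_{K_out} ⊗ ρ) = 1_{H_out} ⊗ N_*(ρ). -/
noncomputable section

open Matrix Kronecker ComplexOrder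

set_option linter.unusedSectionVars false
set_option maxHeartbeats 1000000

namespace SupAux

variable {α β γ : Type*} [Fintype α] [Fintype β] [Fintype γ]

section CP

lemma isCPMap_comp {Φ : Matrix β β ℂ → Matrix γ γ ℂ} {Ψ : Matrix α α ℂ → Matrix β β ℂ}
    (hΦ : IsCPMap Φ) (hΨ : IsCPMap Ψ) : IsCPMap (fun M => Φ (Ψ M)) := by
  intro n M hM
  have h : matAmp n (fun M => Φ (Ψ M)) M = matAmp n Φ (matAmp n Ψ M) := rfl
  rw [h]
  exact hΦ n _ (hΨ n M hM)

lemma posSemidef_map_of_isCPMap {Φ : Matrix α α ℂ → Matrix β β ℂ} (hΦ : IsCPMap Φ)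
    {A : Matrix α α ℂ} (hA : A.PosSemidef) : (Φ A).PosSemidef := by
  have hM : (A.submatrix (Prod.snd : Fin 1 × α → α) Prod.snd).PosSemidef := hA.submatrix _
  have h := hΦ 1 _ hM
  have he : Φ A = (matAmp 1 Φ (A.submatrix Prod.snd Prod.snd)).submatrix
      (fun i => ((0 : Fin 1), i)) (fun i => ((0 : Fin 1), i)) := rfl
  rw [he]
  exact h.submatrix _

end CP

section Basic
variable [DecidableEq α] [DecidableEq β]


variable {α β γ : Type*} [Fintype α] [Fintype β] [Fintype γ] [DecidableEq α] [DecidableEq β]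

lemma trace_mul_single (X : Matrix α α ℂ) (p q : α) :
    (X * Matrix.single p q 1).trace = X q p := by
  simp [Matrix.trace, Matrix.diag, Matrix.mul_apply, Matrix.single, ite_and,
    Finset.sum_ite_eq, Finset.sum_ite_eq']

lemma eq_of_trace_mul_eq {A B : Matrix α α ℂ}
    (h : ∀ F : Matrix α α ℂ, (A * F).trace = (B * F).trace) : A = B := by
  ext q p
  have := h (Matrix.single p q 1)
  simpa [trace_mul_single] using this

lemma trace_conjTranspose_mul (A F : Matrix α α ℂ) :
    (Aᴴ * F).trace = star ((A * Fᴴ).trace) := by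
  simp only [Matrix.trace, Matrix.diag, Matrix.mul_apply, Matrix.conjTranspose_apply]
  rw [star_sum]
  refine Finset.sum_comm.trans (Finset.sum_congr rfl fun j _ => ?_)
  rw [star_sum]
  exact Finset.sum_congr rfl fun i _ => by simp [mul_comm]

lemma psd_diag_nonneg {M : Matrix α α ℂ} (hM : M.PosSemidef) (i : α) : 0 ≤ M i i := by
  have := hM.dotProduct_mulVec_nonneg (Pi.single i 1)
  simpa [dotProduct, Matrix.mulVec, Pi.single_apply] using this

lemma psd_trace_nonneg {M : Matrix α α ℂ} (hM : M.PosSemidef) : 0 ≤ M.trace :=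
  Finset.sum_nonneg fun i _ => psd_diag_nonneg hM i

lemma trace_mul_nonneg {A B : Matrix α α ℂ} (hA : A.PosSemidef) (hB : B.PosSemidef) :
    0 ≤ (A * B).trace := by
  open scoped MatrixOrder Matrix.Norms.L2Operator in
  obtain ⟨C, rfl⟩ := CStarAlgebra.nonneg_iff_eq_star_mul_self.mp hA.nonneg
  rw [Matrix.trace_mul_cycle, Matrix.trace_mul_cycle]
  exact psd_trace_nonneg (hB.mul_mul_conjTranspose_same C)



variable {α : Type*} [Fintype α] [DecidableEq α]

lemma herm_smul_real {M : Matrix α α ℂ} (hM : M.IsHermitian) (r : ℝ) :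
    ((r : ℂ) • M).IsHermitian := by
  ext i j
  simp only [Matrix.conjTranspose_apply, Matrix.smul_apply, star_mul', Complex.star_def,
    Complex.conj_ofReal, smul_eq_mul]
  rw [← hM.apply i j]
  simp [mul_comm]

lemma psd_smul_real {M : Matrix α α ℂ} (hM : M.PosSemidef) {r : ℝ} (hr : 0 ≤ r) :
    ((r : ℂ) • M).PosSemidef := by
  refine Matrix.PosSemidef.of_dotProduct_mulVec_nonneg (herm_smul_real hM.1 r) fun x => ?_
  have h0 : (0:ℂ) ≤ (r:ℂ) := by exact_mod_cast Complex.zero_le_real.mpr hr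
  have := hM.dotProduct_mulVec_nonneg x
  calc (0:ℂ) = (r:ℂ) * 0 := by ring
  _ ≤ (r:ℂ) * (dotProduct (star x) (M *ᵥ x)) := mul_le_mul_of_nonneg_left this h0
  _ = dotProduct (star x) (((r:ℂ) • M) *ᵥ x) := by
      rw [Matrix.smul_mulVec, dotProduct_smul, smul_eq_mul]

lemma quadform_expand (G : Matrix α α ℂ) (x : α → ℂ) :
    dotProduct (star x) (G *ᵥ x) = ∑ p, ∑ q, star (x p) * G p q * x q := by
  simp [dotProduct, Matrix.mulVec, Finset.mul_sum, mul_assoc]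

lemma herm_quadform_real {G : Matrix α α ℂ} (hG : G.IsHermitian) (x : α → ℂ) :
    (dotProduct (star x) (G *ᵥ x)).im = 0 := by
  have h : star (dotProduct (star x) (G *ᵥ x))
      = dotProduct (star x) (G *ᵥ x) := by
    rw [quadform_expand, star_sum]
    rw [Finset.sum_comm]
    refine Finset.sum_congr rfl fun p _ => ?_
    rw [star_sum]
    refine Finset.sum_congr rfl fun q _ => ?_
    rw [star_mul', star_mul', star_star, hG.apply q p]
    ring
  have := congrArg Complex.im h
  simp only [Complex.star_def, Complex.conj_im] at this
  linarith

lemma exists_pert (c : ℝ) (hc : 0 < c) (G : Matrix α α ℂ) (hG : G.IsHermitian) :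
    ∃ t : ℝ, 0 < t ∧ ((c : ℂ) • (1 : Matrix α α ℂ) + (t : ℂ) • G).PosSemidef := by
  set K : ℝ := ∑ p : α, ∑ q : α, ‖G p q‖ with hK
  have hK0 : 0 ≤ K := Finset.sum_nonneg fun p _ => Finset.sum_nonneg fun q _ => by positivity
  refine ⟨c / (K + 1), by positivity, ?_⟩
  set t : ℝ := c / (K + 1) with ht
  have ht0 : 0 < t := by positivity
  have htK : t * K ≤ c := by
    rw [ht, div_mul_eq_mul_div, div_le_iff₀ (by linarith)]
    nlinarith
  refine Matrix.PosSemidef.of_dotProduct_mulVec_nonneg (Matrix.IsHermitian.add (herm_smul_real Matrix.isHermitian_one c)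
      (herm_smul_real hG t)) fun x => ?_
  -- decompose the quadratic form
  set Sr : ℝ := ∑ i, Complex.normSq (x i) with hSr
  have hSr0 : 0 ≤ Sr := Finset.sum_nonneg fun i _ => Complex.normSq_nonneg _
  have hid : dotProduct (star x) ((1 : Matrix α α ℂ) *ᵥ x) = (Sr : ℂ) := by
    rw [Matrix.one_mulVec, hSr]
    push_cast
    simp [dotProduct, Complex.normSq_eq_conj_mul_self, Complex.star_def]
  set Q : ℂ := dotProduct (star x) (G *ᵥ x) with hQ
  have hQim : Q.im = 0 := herm_quadform_real hG x
  -- bound |Q| ≤ K * Sr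
  have hxb : ∀ p, ‖x p‖ ^ 2 ≤ Sr := by
    intro p
    rw [hSr, ← Complex.normSq_eq_norm_sq]
    exact Finset.single_le_sum (fun i _ => Complex.normSq_nonneg (x i)) (Finset.mem_univ p)
  have hQabs : ‖Q‖ ≤ K * Sr := by
    rw [hQ, quadform_expand]
    calc ‖∑ p, ∑ q, star (x p) * G p q * x q‖
        ≤ ∑ p, ‖∑ q, star (x p) * G p q * x q‖ :=
          norm_sum_le _ _
      _ ≤ ∑ p, ∑ q, ‖star (x p) * G p q * x q‖ :=
          Finset.sum_le_sum fun p _ => norm_sum_le _ _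
      _ ≤ ∑ p, ∑ q, ‖G p q‖ * Sr := by
          refine Finset.sum_le_sum fun p _ => Finset.sum_le_sum fun q _ => ?_
          rw [norm_mul, norm_mul,
            show ‖star (x p)‖ = ‖x p‖ from by
              rw [Complex.star_def, Complex.norm_conj]]
          have h1 := hxb p
          have h2 := hxb q
          have a0 := norm_nonneg (x p)
          have b0 := norm_nonneg (x q)
          have g0 := norm_nonneg (G p q)
          have hab : ‖x p‖ * ‖x q‖ ≤ Sr := by
            nlinarith [sq_nonneg (‖x p‖ - ‖x q‖)]
          calc ‖x p‖ * ‖G p q‖ * ‖x q‖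
              = ‖G p q‖ * (‖x p‖ * ‖x q‖) := by ring
            _ ≤ ‖G p q‖ * Sr := by nlinarith
      _ = K * Sr := by rw [hK]; simp [Finset.sum_mul]
  -- assemble
  have hsplit : dotProduct (star x)
      ((((c : ℂ) • (1 : Matrix α α ℂ) + (t : ℂ) • G)) *ᵥ x)
      = (c : ℂ) * (Sr : ℂ) + (t : ℂ) * Q := by
    rw [Matrix.add_mulVec, dotProduct_add, Matrix.smul_mulVec,
      Matrix.smul_mulVec, dotProduct_smul, dotProduct_smul,
      smul_eq_mul, smul_eq_mul, hid, hQ]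
  rw [hsplit]
  have hQre : Q = ((Q.re : ℝ) : ℂ) := Complex.ext rfl (by simp [hQim])
  have hre : -(K * Sr) ≤ Q.re := by
    have h1 : |Q.re| ≤ ‖Q‖ := Complex.abs_re_le_norm Q
    have := (abs_le.mp (h1.trans hQabs)).1
    linarith
  have hfin : 0 ≤ c * Sr + t * Q.re := by
    nlinarith [mul_le_mul_of_nonneg_left hre ht0.le, mul_le_mul_of_nonneg_right htK hSr0]
  have heq : (c : ℂ) * (Sr : ℂ) + (t : ℂ) * Q = (((c * Sr + t * Q.re : ℝ)) : ℂ) := by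
    apply Complex.ext
    · simp [Complex.add_re, Complex.mul_re, hQim]
    · simp [Complex.add_im, Complex.mul_im, hQim]
  rw [heq]
  exact_mod_cast Complex.zero_le_real.mpr hfin


lemma herm_diff {H : Matrix α α ℂ} (hH : H.IsHermitian) :
    ∃ P Q : Matrix α α ℂ, P.PosSemidef ∧ Q.PosSemidef ∧ H = P - Q := by
  obtain ⟨t, ht, hpsd⟩ := exists_pert 1 one_pos H hH
  refine ⟨((t⁻¹ : ℝ) : ℂ) • (((1:ℝ) : ℂ) • 1 + (t : ℂ) • H),
    ((t⁻¹ : ℝ) : ℂ) • (1 : Matrix α α ℂ), psd_smul_real hpsd (by positivity),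
    psd_smul_real Matrix.PosSemidef.one (by positivity), ?_⟩
  have h1 : ((t⁻¹ : ℝ) : ℂ) * (t : ℂ) = 1 := by
    push_cast
    field_simp
  rw [smul_add, smul_smul, smul_smul, h1, one_smul]
  push_cast
  rw [mul_one]
  abel

end Basic

section Star
variable [DecidableEq α] [DecidableEq β]

lemma psd_outer {ι : Type*} [Fintype ι] (x : ι → ℂ) :
    (Matrix.of fun p q => x p * star (x q) : Matrix ι ι ℂ).PosSemidef := by
  refine Matrix.PosSemidef.of_dotProduct_mulVec_nonneg ?_ ?_
  · ext p q
    simp [Matrix.conjTranspose_apply, mul_comm]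
  · intro y
    have h : dotProduct (star y) ((Matrix.of fun p q => x p * star (x q)) *ᵥ y)
        = star (∑ q, star (x q) * y q) * (∑ q, star (x q) * y q) := by
      simp only [dotProduct, Matrix.mulVec, Matrix.of_apply, Pi.star_apply,
        star_sum, star_mul', star_star, Finset.sum_mul, Finset.mul_sum]
      rw [Finset.sum_comm]
      refine Finset.sum_congr rfl fun p _ => Finset.sum_congr rfl fun q _ => by ring
    rw [h]
    exact star_mul_self_nonneg _

lemma trace_mul_expand (A B : Matrix α α ℂ) :
    (A * B).trace = ∑ p, ∑ q, A p q * B q p := by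
  simp [Matrix.trace, Matrix.diag, Matrix.mul_apply]

lemma herm_sym (F : Matrix α α ℂ) : (((1:ℂ)/2) • (F + Fᴴ)).IsHermitian := by
  rw [Matrix.IsHermitian, Matrix.conjTranspose_smul, Matrix.conjTranspose_add,
    Matrix.conjTranspose_conjTranspose]
  rw [show star ((1:ℂ)/2) = (1:ℂ)/2 by simp]
  rw [add_comm]

lemma herm_asym (F : Matrix α α ℂ) : ((-Complex.I/2) • (F - Fᴴ)).IsHermitian := by
  rw [Matrix.IsHermitian, Matrix.conjTranspose_smul, Matrix.conjTranspose_sub,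
    Matrix.conjTranspose_conjTranspose]
  rw [show star (-Complex.I/2 : ℂ) = Complex.I/2 by
    simp [Complex.ext_iff]]
  rw [show (Fᴴ - F) = -(F - Fᴴ) by rw [neg_sub], smul_neg, ← neg_smul, neg_div]

lemma decomp_eq (F : Matrix α α ℂ) :
    F = ((1:ℂ)/2) • (F + Fᴴ) + Complex.I • ((-Complex.I/2) • (F - Fᴴ)) := by
  ext i j
  simp only [Matrix.add_apply, Matrix.smul_apply, Matrix.sub_apply, smul_eq_mul]
  linear_combination ((F i j - Fᴴ i j)/2) * Complex.I_sq

lemma decomp_eq' (F : Matrix α α ℂ) :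
    Fᴴ = ((1:ℂ)/2) • (F + Fᴴ) - Complex.I • ((-Complex.I/2) • (F - Fᴴ)) := by
  ext i j
  simp only [Matrix.add_apply, Matrix.smul_apply, Matrix.sub_apply, smul_eq_mul]
  linear_combination ((Fᴴ i j - F i j)/2) * Complex.I_sq

lemma herm_map (Φ : Matrix α α ℂ →ₗ[ℂ] Matrix β β ℂ)
    (hpos : ∀ A : Matrix α α ℂ, A.PosSemidef → (Φ A).PosSemidef)
    {H : Matrix α α ℂ} (hH : H.IsHermitian) : (Φ H).IsHermitian := by
  obtain ⟨P, Q, hP, hQ, hPQ⟩ := herm_diff hH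
  rw [hPQ, map_sub]
  exact ((hpos P hP).1).sub ((hpos Q hQ).1)

lemma map_conjT (Φ : Matrix α α ℂ →ₗ[ℂ] Matrix β β ℂ)
    (hpos : ∀ A : Matrix α α ℂ, A.PosSemidef → (Φ A).PosSemidef) (F : Matrix α α ℂ) :
    Φ Fᴴ = (Φ F)ᴴ := by
  have h1 : (Φ (((1:ℂ)/2) • (F + Fᴴ))).IsHermitian := herm_map Φ hpos (herm_sym F)
  have h2 : (Φ ((-Complex.I/2) • (F - Fᴴ))).IsHermitian := herm_map Φ hpos (herm_asym F)
  have hd : Φ F = Φ (((1:ℂ)/2) • (F + Fᴴ)) + Complex.I • Φ ((-Complex.I/2) • (F - Fᴴ)) := by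
    rw [← _root_.map_smul Φ Complex.I (((-Complex.I/2) : ℂ) • (F - Fᴴ)), ← map_add, ← decomp_eq]
  have hd' : Φ Fᴴ = Φ (((1:ℂ)/2) • (F + Fᴴ)) - Complex.I • Φ ((-Complex.I/2) • (F - Fᴴ)) := by
    rw [← _root_.map_smul Φ Complex.I (((-Complex.I/2) : ℂ) • (F - Fᴴ)), ← map_sub, ← decomp_eq']
  rw [hd', hd, Matrix.conjTranspose_add, Matrix.conjTranspose_smul, h1.eq, h2.eq,
    Complex.star_def, Complex.conj_I, neg_smul, ← sub_eq_add_neg]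

lemma isCPMap_dual (S : Matrix α α ℂ →ₗ[ℂ] Matrix β β ℂ) (hCP : IsCPMap S)
    (Ss : Matrix β β ℂ →ₗ[ℂ] Matrix α α ℂ)
    (hdual : ∀ C F, ((Ss C) * F).trace = (C * S F).trace) : IsCPMap Ss := by
  have hpos : ∀ A : Matrix α α ℂ, A.PosSemidef → (S A).PosSemidef :=
    fun A hA => posSemidef_map_of_isCPMap hCP hA
  have hstar : ∀ C : Matrix β β ℂ, Ss (Cᴴ) = (Ss C)ᴴ := by
    intro C
    apply eq_of_trace_mul_eq
    intro F
    rw [hdual, trace_conjTranspose_mul C (S F), ← map_conjT S hpos F, ← hdual,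
      ← trace_conjTranspose_mul (Ss C) F]
  intro n N hN
  refine Matrix.PosSemidef.of_dotProduct_mulVec_nonneg ?_ ?_
  · ext ⟨s, u⟩ ⟨t, v⟩
    show star (matAmp n (⇑Ss) N (t, v) (s, u)) = matAmp n (⇑Ss) N (s, u) (t, v)
    calc star (matAmp n (⇑Ss) N (t, v) (s, u))
        = (Ss (Matrix.of fun i j => N (t, i) (s, j)))ᴴ u v := rfl
      _ = Ss ((Matrix.of fun i j => N (t, i) (s, j))ᴴ) u v := by rw [hstar]
      _ = Ss (Matrix.of fun i j => N (s, i) (t, j)) u v := by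
          have hB : ((Matrix.of fun i j => N (t, i) (s, j)) : Matrix β β ℂ)ᴴ
              = Matrix.of fun i j => N (s, i) (t, j) := by
            ext i j
            simp only [Matrix.conjTranspose_apply, Matrix.of_apply]
            exact hN.1.apply (s, i) (t, j)
          rw [hB]
      _ = matAmp n (⇑Ss) N (s, u) (t, v) := rfl
  · intro x
    set V : Matrix (Fin n × α) (Fin n × α) ℂ := Matrix.of fun p q => x p * star (x q) with hV
    have hAmp : (matAmp n (⇑S) V).PosSemidef := hCP n V (psd_outer x)
    have lhs : dotProduct (star x) (matAmp n (⇑Ss) N *ᵥ x)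
        = ∑ s : Fin n, ∑ t : Fin n,
            ((Ss (Matrix.of fun i j => N (s, i) (t, j)))
              * (Matrix.of fun v u => x (t, v) * star (x (s, u)))).trace := by
      rw [quadform_expand]
      simp_rw [Fintype.sum_prod_type]
      rw [show (∑ s : Fin n, ∑ u : α, ∑ t : Fin n, ∑ v : α,
            star (x (s, u)) * matAmp n (⇑Ss) N (s, u) (t, v) * x (t, v))
          = ∑ s : Fin n, ∑ t : Fin n, ∑ u : α, ∑ v : α,
            star (x (s, u)) * matAmp n (⇑Ss) N (s, u) (t, v) * x (t, v) from
        Finset.sum_congr rfl fun s _ => Finset.sum_comm]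
      refine Finset.sum_congr rfl fun s _ => Finset.sum_congr rfl fun t _ => ?_
      rw [trace_mul_expand]
      refine Finset.sum_congr rfl fun u _ => Finset.sum_congr rfl fun v _ => ?_
      have hX : matAmp n (⇑Ss) N (s, u) (t, v)
          = Ss (Matrix.of fun i j => N (s, i) (t, j)) u v := rfl
      rw [hX, Matrix.of_apply]
      ring
    have rhs : (N * matAmp n (⇑S) V).trace
        = ∑ s : Fin n, ∑ t : Fin n,
            ((Matrix.of fun i j => N (s, i) (t, j))
              * S (Matrix.of fun v u => x (t, v) * star (x (s, u)))).trace := by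
      rw [trace_mul_expand]
      simp_rw [Fintype.sum_prod_type]
      rw [show (∑ s : Fin n, ∑ i : β, ∑ t : Fin n, ∑ j : β,
            N (s, i) (t, j) * matAmp n (⇑S) V (t, j) (s, i))
          = ∑ s : Fin n, ∑ t : Fin n, ∑ i : β, ∑ j : β,
            N (s, i) (t, j) * matAmp n (⇑S) V (t, j) (s, i) from
        Finset.sum_congr rfl fun s _ => Finset.sum_comm]
      refine Finset.sum_congr rfl fun s _ => Finset.sum_congr rfl fun t _ => ?_
      rw [trace_mul_expand]
      refine Finset.sum_congr rfl fun i _ => Finset.sum_congr rfl fun j _ => ?_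
      have hY : matAmp n (⇑S) V (t, j) (s, i)
          = S (Matrix.of fun v u => x (t, v) * star (x (s, u))) j i := rfl
      rw [hY, Matrix.of_apply]
    have key : dotProduct (star x) (matAmp n (⇑Ss) N *ᵥ x)
        = (N * matAmp n (⇑S) V).trace := by
      rw [lhs, rhs]
      exact Finset.sum_congr rfl fun s _ => Finset.sum_congr rfl fun t _ => hdual _ _
    rw [key]
    exact trace_mul_nonneg hN hAmp

end Star

section PtrFst
variable [DecidableEq α] [DecidableEq β] [DecidableEq γ]

lemma ptrFst_add (A B : Matrix (γ × β) (γ × β) ℂ) : ptrFst (A + B) = ptrFst A + ptrFst B := by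
  ext i j
  simp [ptrFst, Finset.sum_add_distrib]

lemma ptrFst_sub (A B : Matrix (γ × β) (γ × β) ℂ) : ptrFst (A - B) = ptrFst A - ptrFst B := by
  ext i j
  simp [ptrFst, Finset.sum_sub_distrib]

lemma ptrFst_smul (c : ℂ) (A : Matrix (γ × β) (γ × β) ℂ) : ptrFst (c • A) = c • ptrFst A := by
  ext i j
  simp [ptrFst, Finset.mul_sum]

lemma ptrFst_conjT (A : Matrix (γ × β) (γ × β) ℂ) : ptrFst (Aᴴ) = (ptrFst A)ᴴ := by
  ext i j
  simp [ptrFst, Matrix.conjTranspose_apply, star_sum]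

lemma ptrFst_one : ptrFst (1 : Matrix (γ × β) (γ × β) ℂ) = (Fintype.card γ : ℂ) • 1 := by
  ext i j
  simp [ptrFst, Matrix.one_apply, Prod.ext_iff, Matrix.smul_apply]

lemma trace_one_kron_mul (ρ : Matrix β β ℂ) (M : Matrix (γ × β) (γ × β) ℂ) :
    (((1 : Matrix γ γ ℂ) ⊗ₖ ρ) * M).trace = (ρ * ptrFst M).trace := by
  rw [trace_mul_expand, trace_mul_expand]
  simp only [Fintype.sum_prod_type, Matrix.kroneckerMap_apply, Matrix.one_apply,
    ite_mul, one_mul, zero_mul]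
  rw [Finset.sum_comm]
  refine Finset.sum_congr rfl fun i _ => ?_
  have hcol : ∀ a : γ, (∑ b : γ, ∑ j : β, if a = b then ρ i j * M (b, j) (a, i) else 0)
      = ∑ j : β, ρ i j * M (a, j) (a, i) := by
    intro a
    rw [Finset.sum_comm]
    refine Finset.sum_congr rfl fun j _ => ?_
    simp
  calc (∑ a : γ, ∑ b : γ, ∑ j : β, if a = b then ρ i j * M (b, j) (a, i) else 0)
      = ∑ a : γ, ∑ j : β, ρ i j * M (a, j) (a, i) := Finset.sum_congr rfl fun a _ => hcol a
    _ = ∑ j : β, ρ i j * ptrFst M j i := by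
        rw [Finset.sum_comm]
        refine Finset.sum_congr rfl fun j _ => ?_
        rw [show ptrFst M j i = ∑ a : γ, M (a, j) (a, i) from rfl, Finset.mul_sum]

lemma ptrFst_std (a b : γ) (i j : β) :
    ptrFst (Matrix.single ((a, i) : γ × β) (b, j) (1:ℂ))
      = if a = b then Matrix.single i j (1:ℂ) else 0 := by
  ext i' j'
  show (∑ cc : γ, Matrix.single ((a, i) : γ × β) (b, j) (1:ℂ) (cc, i') (cc, j')) = _
  simp only [Matrix.single, Matrix.of_apply, Prod.mk.injEq]
  by_cases hab : a = b
  · subst hab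
    rw [if_pos rfl]
    rw [Finset.sum_eq_single a]
    · by_cases h1 : i = i' <;> by_cases h2 : j = j' <;> simp [h1, h2]
    · intro cc _ hcc
      rw [if_neg]
      rintro ⟨⟨h, -⟩, -⟩
      exact hcc h.symm
    · intro h
      exact absurd (Finset.mem_univ a) h
  · rw [if_neg hab]
    refine Finset.sum_eq_zero fun cc _ => ?_
    rw [if_neg]
    rintro ⟨⟨h1, -⟩, ⟨h2, -⟩⟩
    exact hab (h1.trans h2.symm)

end PtrFst

section Channels
variable [DecidableEq α] [DecidableEq β] [DecidableEq γ]

lemma psd_one_kron {M : Matrix α α ℂ} (hM : M.PosSemidef) :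
    ((1 : Matrix γ γ ℂ) ⊗ₖ M).PosSemidef := by
  refine Matrix.PosSemidef.of_dotProduct_mulVec_nonneg ?_ ?_
  · ext ⟨e, u⟩ ⟨f, v⟩
    simp only [Matrix.conjTranspose_apply, Matrix.kroneckerMap_apply]
    rw [star_mul', hM.1.apply u v]
    congr 1
    by_cases h : e = f <;> simp [Matrix.one_apply, h, eq_comm]
  · intro y
    rw [quadform_expand]
    have step : (∑ p : γ × α, ∑ q : γ × α,
          star (y p) * ((1 : Matrix γ γ ℂ) ⊗ₖ M) p q * y q)
        = ∑ e : γ, ∑ u : α, ∑ v : α, star (y (e, u)) * M u v * y (e, v) := by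
      simp_rw [Fintype.sum_prod_type]
      refine Finset.sum_congr rfl fun e _ => Finset.sum_congr rfl fun u _ => ?_
      rw [Finset.sum_comm]
      refine Finset.sum_congr rfl fun v _ => ?_
      simp [Matrix.kroneckerMap_apply, Matrix.one_apply, ite_mul, mul_ite]
    rw [step]
    refine Finset.sum_nonneg fun e _ => ?_
    have h := hM.dotProduct_mulVec_nonneg (fun u => y (e, u))
    rw [quadform_expand] at h
    simpa using h

lemma isCPMap_emb : IsCPMap (fun ρ : Matrix α α ℂ => (1 : Matrix γ γ ℂ) ⊗ₖ ρ) := by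
  intro n M hM
  have h : matAmp n (fun ρ : Matrix α α ℂ => (1 : Matrix γ γ ℂ) ⊗ₖ ρ) M
      = ((1 : Matrix γ γ ℂ) ⊗ₖ M).submatrix
          (fun p : Fin n × γ × α => (p.2.1, (p.1, p.2.2)))
          (fun p : Fin n × γ × α => (p.2.1, (p.1, p.2.2))) := rfl
  rw [h]
  exact (psd_one_kron hM).submatrix _

lemma isCPMap_ext (a₀ : γ) :
    IsCPMap (fun X : Matrix (γ × α) (γ × α) ℂ => Matrix.of fun j j' => X (a₀, j) (a₀, j')) := by
  intro n M hM
  have h : matAmp n (fun X : Matrix (γ × α) (γ × α) ℂ => Matrix.of fun j j' => X (a₀, j) (a₀, j')) M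
      = M.submatrix (fun p : Fin n × α => (p.1, (a₀, p.2))) (fun p => (p.1, (a₀, p.2))) := rfl
  rw [h]
  exact hM.submatrix _

lemma isCPMap_traceScale (c : ℝ) (hc : 0 ≤ c) :
    IsCPMap (fun ρ : Matrix α α ℂ => (ρ.trace * ((c : ℝ) : ℂ)) • (1 : Matrix β β ℂ)) := by
  intro n M hM
  have hc' : (0:ℂ) ≤ ((c:ℝ) : ℂ) := by exact_mod_cast Complex.zero_le_real.mpr hc
  have hamp : ∀ (s t : Fin n) (i j : β), matAmp n
        (fun ρ : Matrix α α ℂ => (ρ.trace * ((c : ℝ) : ℂ)) • (1 : Matrix β β ℂ)) M (s, i) (t, j)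
      = (∑ l : α, M (s, l) (t, l)) * ((c:ℝ) : ℂ) * (1 : Matrix β β ℂ) i j :=
    fun _ _ _ _ => rfl
  refine Matrix.PosSemidef.of_dotProduct_mulVec_nonneg ?_ ?_
  · ext ⟨s, u⟩ ⟨t, v⟩
    simp only [Matrix.conjTranspose_apply]
    rw [hamp, hamp]
    by_cases h : u = v
    · subst h
      rw [Matrix.one_apply_eq, mul_one, star_mul', star_sum]
      simp only [show ∀ l, star (M (t, l) (s, l)) = M (s, l) (t, l) from
        fun l => hM.1.apply (s, l) (t, l)]
      rw [Complex.star_def, Complex.conj_ofReal]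
      ring
    · rw [Matrix.one_apply_ne (show v ≠ u from fun hh => h hh.symm), Matrix.one_apply_ne h]
      simp
  · intro x
    rw [quadform_expand]
    have e1 : (∑ p : Fin n × β, ∑ q : Fin n × β, star (x p)
          * matAmp n (fun ρ : Matrix α α ℂ => (ρ.trace * ((c : ℝ) : ℂ)) • (1 : Matrix β β ℂ)) M p q
          * x q)
        = ∑ s : Fin n, ∑ i : β, ∑ t : Fin n, ∑ j : β,
            star (x (s, i)) * ((∑ l : α, M (s, l) (t, l)) * ((c:ℝ) : ℂ)
              * (1 : Matrix β β ℂ) i j) * x (t, j) := by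
      simp_rw [Fintype.sum_prod_type, hamp]
    have e2 : (∑ s : Fin n, ∑ i : β, ∑ t : Fin n, ∑ j : β,
            star (x (s, i)) * ((∑ l : α, M (s, l) (t, l)) * ((c:ℝ) : ℂ)
              * (1 : Matrix β β ℂ) i j) * x (t, j))
        = ∑ s : Fin n, ∑ i : β, ∑ t : Fin n, ∑ l : α,
            ((c:ℝ) : ℂ) * (star (x (s, i)) * M (s, l) (t, l) * x (t, i)) := by
      refine Finset.sum_congr rfl fun s _ => Finset.sum_congr rfl fun i _ =>
        Finset.sum_congr rfl fun t _ => ?_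
      rw [Finset.sum_eq_single i]
      · rw [show (1 : Matrix β β ℂ) i i = 1 from Matrix.one_apply_eq i, mul_one,
          Finset.sum_mul, Finset.mul_sum, Finset.sum_mul]
        exact Finset.sum_congr rfl fun l _ => by ring
      · intro j _ hj
        rw [show (1 : Matrix β β ℂ) i j = 0 from Matrix.one_apply_ne (Ne.symm hj)]
        ring
      · intro hi
        exact absurd (Finset.mem_univ i) hi
    have e3 : (∑ s : Fin n, ∑ i : β, ∑ t : Fin n, ∑ l : α,
            ((c:ℝ) : ℂ) * (star (x (s, i)) * M (s, l) (t, l) * x (t, i)))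
        = ∑ i : β, ∑ l : α, ∑ s : Fin n, ∑ t : Fin n,
            ((c:ℝ) : ℂ) * (star (x (s, i)) * M (s, l) (t, l) * x (t, i)) := by
      rw [Finset.sum_comm]
      refine Finset.sum_congr rfl fun i _ => ?_
      rw [show (∑ s : Fin n, ∑ t : Fin n, ∑ l : α,
            ((c:ℝ) : ℂ) * (star (x (s, i)) * M (s, l) (t, l) * x (t, i)))
          = ∑ s : Fin n, ∑ l : α, ∑ t : Fin n,
            ((c:ℝ) : ℂ) * (star (x (s, i)) * M (s, l) (t, l) * x (t, i)) from
        Finset.sum_congr rfl fun s _ => Finset.sum_comm]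
      exact Finset.sum_comm
    rw [e1, e2, e3]
    refine Finset.sum_nonneg fun i _ => Finset.sum_nonneg fun l _ => ?_
    have h := (hM.submatrix (fun s : Fin n => ((s, l) : Fin n × α))).dotProduct_mulVec_nonneg (fun s => x (s, i))
    rw [quadform_expand] at h
    simp only [Matrix.submatrix_apply] at h
    calc (0:ℂ) = ((c:ℝ) : ℂ) * 0 := by ring
      _ ≤ ((c:ℝ) : ℂ) * (∑ s : Fin n, ∑ t : Fin n,
            star (x (s, i)) * M (s, l) (t, l) * x (t, i)) := by
          exact mul_le_mul_of_nonneg_left h hc'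
      _ = ∑ s : Fin n, ∑ t : Fin n,
            ((c:ℝ) : ℂ) * (star (x (s, i)) * M (s, l) (t, l) * x (t, i)) := by
          rw [Finset.mul_sum]
          exact Finset.sum_congr rfl fun s _ => by rw [Finset.mul_sum]

end Channels

end SupAux

/-- Lemma 2: a deterministic supermap `S`, via its Hilbert–Schmidt adjoint `S_*`, sends
`1_{K_out} ⊗ ρ` to `1_{H_out} ⊗ N_*(ρ)` for some channel `N_* : B(K_in) → B(H_in)`. -/
theorem supermap_dual_identity_times_channel (hi ho ki ko : ℕ)
    (S : Matrix (Fin ho × Fin hi) (Fin ho × Fin hi) ℂ →ₗ[ℂ]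
         Matrix (Fin ko × Fin ki) (Fin ko × Fin ki) ℂ)
    (hCP : IsCPMap S)
    (hTP : ∀ F : Matrix (Fin ho × Fin hi) (Fin ho × Fin hi) ℂ,
      F.PosSemidef → ptrFst F = 1 → (S F).PosSemidef ∧ ptrFst (S F) = 1)
    (Ss : Matrix (Fin ko × Fin ki) (Fin ko × Fin ki) ℂ →ₗ[ℂ]
          Matrix (Fin ho × Fin hi) (Fin ho × Fin hi) ℂ)
    (hdual : ∀ (C : Matrix (Fin ko × Fin ki) (Fin ko × Fin ki) ℂ)
      (F : Matrix (Fin ho × Fin hi) (Fin ho × Fin hi) ℂ),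
      ((Ss C) * F).trace = (C * S F).trace) :
    ∃ Ns : Matrix (Fin ki) (Fin ki) ℂ →ₗ[ℂ] Matrix (Fin hi) (Fin hi) ℂ,
      IsCPMap Ns ∧
      (∀ ρ : Matrix (Fin ki) (Fin ki) ℂ, (Ns ρ).trace = ρ.trace) ∧
      ∀ ρ : Matrix (Fin ki) (Fin ki) ℂ, ρ.PosSemidef → ρ.trace = 1 →
        Ss ((1 : Matrix (Fin ko) (Fin ko) ℂ) ⊗ₖ ρ) =
          (1 : Matrix (Fin ho) (Fin ho) ℂ) ⊗ₖ Ns ρ := by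
  classical
  by_cases hho : ho = 0
  · -- degenerate case: H_out is trivial
    have hki : hi = 0 → ki = 0 := by
      intro hhi
      by_contra hkine
      have hFtr : ptrFst (0 : Matrix (Fin ho × Fin hi) (Fin ho × Fin hi) ℂ) = 1 := by
        ext i j
        exact absurd i.isLt (by omega)
      obtain ⟨-, h1⟩ := hTP 0 Matrix.PosSemidef.zero hFtr
      rw [map_zero] at h1
      have h2 : ptrFst (0 : Matrix (Fin ko × Fin ki) (Fin ko × Fin ki) ℂ) = 0 := by
        ext i j
        simp [ptrFst]
      rw [h2] at h1
      have h3 := congrFun (congrFun h1 ⟨0, Nat.pos_of_ne_zero hkine⟩)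
        ⟨0, Nat.pos_of_ne_zero hkine⟩
      rw [Matrix.zero_apply, Matrix.one_apply_eq] at h3
      exact zero_ne_one h3
    refine ⟨{ toFun := fun ρ => (ρ.trace * (((hi : ℝ)⁻¹ : ℝ) : ℂ)) • (1 : Matrix (Fin hi) (Fin hi) ℂ),
              map_add' := fun ρ σ => by
                rw [Matrix.trace_add, add_mul, add_smul]
              map_smul' := fun a ρ => by
                rw [Matrix.trace_smul, RingHom.id_apply, smul_eq_mul, mul_assoc,
                  ← smul_smul] },
      ?_, ?_, ?_⟩
    · exact SupAux.isCPMap_traceScale (hi : ℝ)⁻¹ (by positivity)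
    · intro ρ
      show ((ρ.trace * (((hi : ℝ)⁻¹ : ℝ) : ℂ)) • (1 : Matrix (Fin hi) (Fin hi) ℂ)).trace = ρ.trace
      rw [Matrix.trace_smul, Matrix.trace_one, smul_eq_mul]
      by_cases hhi : hi = 0
      · have hk := hki hhi
        have hρ : ρ.trace = 0 := by
          rw [Matrix.trace]
          have : IsEmpty (Fin ki) := by rw [hk]; infer_instance
          simp
        rw [hρ]
        ring
      · rw [mul_assoc, show (((hi : ℝ)⁻¹ : ℝ) : ℂ) * ((Fintype.card (Fin hi) : ℕ) : ℂ) = 1 from by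
          rw [Fintype.card_fin]
          push_cast
          field_simp, mul_one]
    · intro ρ _ _
      ext ⟨a, i⟩ ⟨b, j⟩
      exact absurd a.isLt (by omega)
  · -- main case
    have hhop : 0 < ho := Nat.pos_of_ne_zero hho
    have hF0psd : ((((ho:ℝ)⁻¹ : ℝ) : ℂ) •
        (1 : Matrix (Fin ho × Fin hi) (Fin ho × Fin hi) ℂ)).PosSemidef :=
      SupAux.psd_smul_real Matrix.PosSemidef.one (by positivity)
    have hcard : (((ho:ℝ)⁻¹ : ℝ) : ℂ) * ((Fintype.card (Fin ho) : ℕ) : ℂ) = 1 := by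
      rw [Fintype.card_fin]
      push_cast
      field_simp
    have hF0tr : ptrFst ((((ho:ℝ)⁻¹ : ℝ) : ℂ) •
        (1 : Matrix (Fin ho × Fin hi) (Fin ho × Fin hi) ℂ)) = 1 := by
      rw [SupAux.ptrFst_smul, SupAux.ptrFst_one, smul_smul, hcard, one_smul]
    obtain ⟨hSF0psd, hSF0tr⟩ := hTP _ hF0psd hF0tr
    have hker_herm : ∀ H : Matrix (Fin ho × Fin hi) (Fin ho × Fin hi) ℂ,
        H.IsHermitian → ptrFst H = 0 → ptrFst (S H) = 0 := by
      intro H hH h0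
      obtain ⟨t, ht, hpsd⟩ := SupAux.exists_pert ((ho:ℝ)⁻¹) (by positivity) H hH
      have hsum_tr : ptrFst ((((ho:ℝ)⁻¹ : ℝ) : ℂ) • 1 + ((t:ℝ) : ℂ) • H) = 1 := by
        rw [SupAux.ptrFst_add, hF0tr, SupAux.ptrFst_smul, h0, smul_zero, add_zero]
      obtain ⟨-, h1⟩ := hTP _ hpsd hsum_tr
      rw [map_add, _root_.map_smul S ((t:ℝ) : ℂ) H, SupAux.ptrFst_add, SupAux.ptrFst_smul,
        hSF0tr] at h1
      have h2 : ((t:ℝ) : ℂ) • ptrFst (S H) = 0 := by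
        rwa [add_eq_left] at h1
      rcases smul_eq_zero.mp h2 with h | h
      · exact absurd h (Complex.ofReal_ne_zero.mpr ht.ne')
      · exact h
    have hker : ∀ G : Matrix (Fin ho × Fin hi) (Fin ho × Fin hi) ℂ,
        ptrFst G = 0 → ptrFst (S G) = 0 := by
      intro G h0
      have h0' : ptrFst (Gᴴ) = 0 := by
        rw [SupAux.ptrFst_conjT, h0, Matrix.conjTranspose_zero]
      have k1 := hker_herm _ (SupAux.herm_sym G) (by
        rw [SupAux.ptrFst_smul, SupAux.ptrFst_add, h0, h0', add_zero, smul_zero])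
      have k2 := hker_herm _ (SupAux.herm_asym G) (by
        rw [SupAux.ptrFst_smul, SupAux.ptrFst_sub, h0, h0', sub_zero, smul_zero])
      have hG : S G = S (((1:ℂ)/2) • (G + Gᴴ))
          + Complex.I • S ((-Complex.I/2) • (G - Gᴴ)) := by
        rw [← _root_.map_smul S Complex.I (((-Complex.I/2) : ℂ) • (G - Gᴴ)), ← map_add,
          ← SupAux.decomp_eq]
      rw [hG, SupAux.ptrFst_add, SupAux.ptrFst_smul, k1, k2, smul_zero, add_zero]
    have pair : ∀ (ρ : Matrix (Fin ki) (Fin ki) ℂ)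
        (G : Matrix (Fin ho × Fin hi) (Fin ho × Fin hi) ℂ),
        (Ss ((1 : Matrix (Fin ko) (Fin ko) ℂ) ⊗ₖ ρ) * G).trace = (ρ * ptrFst (S G)).trace := by
      intro ρ G
      rw [hdual, SupAux.trace_one_kron_mul]
    have vanish : ∀ (ρ : Matrix (Fin ki) (Fin ki) ℂ)
        (G : Matrix (Fin ho × Fin hi) (Fin ho × Fin hi) ℂ),
        ptrFst G = 0 → (Ss ((1 : Matrix (Fin ko) (Fin ko) ℂ) ⊗ₖ ρ) * G).trace = 0 := by
      intro ρ G h0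
      rw [pair, hker G h0, Matrix.mul_zero, Matrix.trace_zero]
    have main : ∀ ρ : Matrix (Fin ki) (Fin ki) ℂ,
        Ss ((1 : Matrix (Fin ko) (Fin ko) ℂ) ⊗ₖ ρ)
          = (1 : Matrix (Fin ho) (Fin ho) ℂ) ⊗ₖ (Matrix.of fun j i =>
              Ss ((1 : Matrix (Fin ko) (Fin ko) ℂ) ⊗ₖ ρ) (⟨0, hhop⟩, j) (⟨0, hhop⟩, i)) := by
      intro ρ
      ext ⟨b, j⟩ ⟨a, i⟩
      rw [Matrix.kroneckerMap_apply, Matrix.of_apply]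
      by_cases hab : b = a
      · subst hab
        rw [Matrix.one_apply_eq, one_mul]
        have h0 : ptrFst (Matrix.single ((b, i) : Fin ho × Fin hi) (b, j) (1:ℂ)
            - Matrix.single ((⟨0, hhop⟩ : Fin ho), i) (⟨0, hhop⟩, j) 1) = 0 := by
          rw [SupAux.ptrFst_sub, SupAux.ptrFst_std, SupAux.ptrFst_std, if_pos rfl, if_pos rfl,
            sub_self]
        have hv := vanish ρ _ h0
        rw [Matrix.mul_sub, Matrix.trace_sub, SupAux.trace_mul_single,
          SupAux.trace_mul_single, sub_eq_zero] at hv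
        exact hv
      · rw [Matrix.one_apply_ne hab, zero_mul]
        have h0 : ptrFst (Matrix.single ((a, i) : Fin ho × Fin hi) (b, j) (1:ℂ)) = 0 := by
          rw [SupAux.ptrFst_std, if_neg (fun h => hab h.symm)]
        have hv := vanish ρ _ h0
        rw [SupAux.trace_mul_single] at hv
        exact hv
    have hNsCP : IsCPMap (fun ρ : Matrix (Fin ki) (Fin ki) ℂ => Matrix.of fun j i =>
        Ss ((1 : Matrix (Fin ko) (Fin ko) ℂ) ⊗ₖ ρ) (⟨0, hhop⟩, j) (⟨0, hhop⟩, i)) := by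
      have hSs := SupAux.isCPMap_dual S hCP Ss hdual
      have hemb := SupAux.isCPMap_emb (α := Fin ki) (γ := Fin ko)
      have hext := SupAux.isCPMap_ext (α := Fin hi) (γ := Fin ho) ⟨0, hhop⟩
      have hcomp := SupAux.isCPMap_comp hext (SupAux.isCPMap_comp hSs hemb)
      exact hcomp
    refine ⟨{
        toFun := fun ρ => Matrix.of fun j i =>
            Ss ((1 : Matrix (Fin ko) (Fin ko) ℂ) ⊗ₖ ρ) (⟨0, hhop⟩, j) (⟨0, hhop⟩, i)
        map_add' := fun ρ σ => by
          ext j i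
          simp only [Matrix.kronecker_add, map_add, Matrix.add_apply, Matrix.of_apply]
        map_smul' := fun a ρ => by
          ext j i
          simp only [Matrix.kronecker_smul, _root_.map_smul, Matrix.smul_apply,
            Matrix.of_apply, RingHom.id_apply] },
      hNsCP, ?_, ?_⟩
    · intro ρ
      have h1 : (Ss ((1 : Matrix (Fin ko) (Fin ko) ℂ) ⊗ₖ ρ)
          * ((((ho:ℝ)⁻¹ : ℝ) : ℂ) • 1)).trace = ρ.trace := by
        rw [pair, hSF0tr, Matrix.mul_one]
      rw [main ρ, Matrix.mul_smul, Matrix.trace_smul, Matrix.mul_one,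
        Matrix.trace_kronecker, Matrix.trace_one, smul_eq_mul, ← mul_assoc, hcard,
        one_mul] at h1
      exact h1
    · intro ρ _ _
      exact main ρ
end
end
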